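/- Let (x,t) and (x₁,t₁) be points in ℝ × (0,∞) with t ≤ t₁, and suppose the open intervals J = (y⁻(x,t), y⁺(x,t)) and J₁ = (y⁻(x₁,t₁), y⁺(x₁,t₁)) are both nonempty. Then either J and J₁ are disjoint, or J ⊆ J₁; the inclusion J ⊆ J₁ holds exactly when (x,t) = (x₁,t₁), or when t < t₁ and x₁ = w(x; t, t₁). -/

import Mathlib

open Set Filter MeasureTheory
open scoped NNReal ENNReal

/-- Hopf–Lax formula with flux f(ρ)=ρ², conjugate g(x)=x²/4:
`u(x,t) = inf_{y ≤ x} { u0(y) + (x-y)²/(4t) }`, with `u(x,0)=u0(x)`. -/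
noncomputable def hopfLax (u0 : ℝ → ℝ) (x t : ℝ) : ℝ :=
  if t = 0 then u0 x
  else sInf ((fun y => u0 y + (x - y) ^ 2 / (4 * t)) '' Iic x)

/-- Minimizer set `I(x;s,t)` in the semigroup Hopf–Lax formula.
For `s = 0` this is the set `I(x,t)` of Hopf–Lax minimizers. -/
noncomputable def minSet (u0 : ℝ → ℝ) (x s t : ℝ) : Set ℝ :=
  {y | y ≤ x ∧ hopfLax u0 x t = hopfLax u0 y s + (x - y) ^ 2 / (4 * (t - s))}

/-- Minimal Hopf–Lax minimizer `y⁻(x;s,t)`. -/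
noncomputable def yminus (u0 : ℝ → ℝ) (x s t : ℝ) : ℝ := sInf (minSet u0 x s t)

/-- Maximal Hopf–Lax minimizer `y⁺(x;s,t)`. -/
noncomputable def yplus (u0 : ℝ → ℝ) (x s t : ℝ) : ℝ := sSup (minSet u0 x s t)

/-- Minimal forward characteristic `w⁻(a;s,t) = inf{x : y±(x;s,t) ≥ a}`. -/
noncomputable def wminus (u0 : ℝ → ℝ) (a s t : ℝ) : ℝ :=
  sInf {x | a ≤ yminus u0 x s t}

/-- Maximal forward characteristic `w⁺(a;s,t) = sup{x : y±(x;s,t) ≤ a}`. -/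
noncomputable def wplus (u0 : ℝ → ℝ) (a s t : ℝ) : ℝ :=
  sSup {x | yplus u0 x s t ≤ a}


/-- difference identity for the quadratic interpolation inequality -/
lemma quad_diff (a b p q : ℝ) (ha : 0 < a) (hb : 0 < b) :
    p ^ 2 / (4 * a) + q ^ 2 / (4 * b) - (p + q) ^ 2 / (4 * (a + b))
      = (p * b - q * a) ^ 2 / (4 * a * b * (a + b)) := by
  have h1 : a ≠ 0 := ha.ne'
  have h2 : b ≠ 0 := hb.ne'
  have h3 : a + b ≠ 0 := by positivity
  field_simp
  ring

lemma quad_le (a b p q : ℝ) (ha : 0 < a) (hb : 0 < b) :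
    (p + q) ^ 2 / (4 * (a + b)) ≤ p ^ 2 / (4 * a) + q ^ 2 / (4 * b) := by
  have := quad_diff a b p q ha hb
  nlinarith [sq_nonneg (p * b - q * a), div_nonneg (sq_nonneg (p * b - q * a)) (by positivity : (0:ℝ) ≤ 4 * a * b * (a + b))]

lemma quad_eq_case (a b p q : ℝ) (ha : 0 < a) (hb : 0 < b)
    (h : p ^ 2 / (4 * a) + q ^ 2 / (4 * b) = (p + q) ^ 2 / (4 * (a + b))) :
    p * b = q * a := by
  have hd := quad_diff a b p q ha hb
  rw [h, sub_self] at hd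
  have : (p * b - q * a) ^ 2 = 0 := by
    have h4 : (0:ℝ) < 4 * a * b * (a + b) := by positivity
    field_simp at hd
    nlinarith [hd]
  nlinarith [this]

/-- A lower semicontinuous function attains its minimum on a nonempty compact set. -/
lemma lsc_exists_min {s : Set ℝ} (hs : IsCompact s) (hne : s.Nonempty) {f : ℝ → ℝ}
    (hf : LowerSemicontinuous f) : ∃ y ∈ s, ∀ z ∈ s, f y ≤ f z := by
  by_cases hbdd : BddBelow (f '' s)
  · set m := sInf (f '' s) with hm
    set T : ℕ → Set ℝ := fun n => s ∩ f ⁻¹' (Iic (m + 1 / (n + 1))) with hT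
    have hTcl : ∀ n, IsClosed (T n) := fun n =>
      (hs.isClosed).inter (hf.isClosed_preimage _)
    have hTne : ∀ n, (T n).Nonempty := by
      intro n
      have hlt : m < m + 1 / (n + 1) := by
        have : (0:ℝ) < 1 / (n + 1) := by positivity
        linarith
      obtain ⟨v, hv, hvlt⟩ := exists_lt_of_csInf_lt (hne.image f) hlt
      obtain ⟨y, hy, rfl⟩ := hv
      exact ⟨y, hy, le_of_lt hvlt⟩
    have hTsub : ∀ n, T (n + 1) ⊆ T n := by
      intro n z hz
      refine ⟨hz.1, ?_⟩
      have : (1:ℝ) / (n + 1 + 1) ≤ 1 / (n + 1) := by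
        apply one_div_le_one_div_of_le (by positivity) (by push_cast; linarith)
      have := hz.2
      simp only [mem_preimage, mem_Iic] at this ⊢
      push_cast at this ⊢
      linarith
    have hcompact : IsCompact (T 0) := hs.of_isClosed_subset (hTcl 0) inter_subset_left
    obtain ⟨y, hy⟩ := IsCompact.nonempty_iInter_of_sequence_nonempty_isCompact_isClosed
      T hTsub hTne hcompact hTcl
    simp only [mem_iInter] at hy
    refine ⟨y, (hy 0).1, fun z hz => ?_⟩
    have h1 : f y ≤ m := by
      have h2 : ∀ n : ℕ, f y ≤ m + 1 / (n + 1) := fun n => (hy n).2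
      by_contra h3
      push_neg at h3
      obtain ⟨n, hn⟩ := exists_nat_one_div_lt (sub_pos.2 h3)
      have := h2 n
      push_cast at this hn
      linarith
    exact h1.trans (csInf_le hbdd ⟨z, hz, rfl⟩)
  · exfalso
    set T : ℕ → Set ℝ := fun n => s ∩ f ⁻¹' (Iic (-(n:ℝ))) with hT
    have hTcl : ∀ n, IsClosed (T n) := fun n =>
      (hs.isClosed).inter (hf.isClosed_preimage _)
    have hTne : ∀ n, (T n).Nonempty := by
      intro n
      rw [not_bddBelow_iff] at hbdd
      obtain ⟨v, hv, hvlt⟩ := hbdd (-(n:ℝ))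
      obtain ⟨y, hy, rfl⟩ := hv
      exact ⟨y, hy, le_of_lt hvlt⟩
    have hTsub : ∀ n, T (n + 1) ⊆ T n := by
      intro n z hz
      refine ⟨hz.1, ?_⟩
      have := hz.2
      simp only [mem_preimage, mem_Iic] at this ⊢
      push_cast at this ⊢
      linarith
    have hcompact : IsCompact (T 0) := hs.of_isClosed_subset (hTcl 0) inter_subset_left
    obtain ⟨y, hy⟩ := IsCompact.nonempty_iInter_of_sequence_nonempty_isCompact_isClosed
      T hTsub hTne hcompact hTcl
    simp only [mem_iInter] at hy
    obtain ⟨n, hn⟩ := exists_nat_gt (-(f y))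
    have := (hy n).2
    simp only [mem_preimage, mem_Iic] at this
    linarith

/-- monotone + left-continuous implies lower semicontinuous -/
lemma mono_lc_lsc {u0 : ℝ → ℝ} (hmono : Monotone u0)
    (hlc : ∀ y : ℝ, ContinuousWithinAt u0 (Iic y) y) : LowerSemicontinuous u0 := by
  intro y c hc
  have h1 : ∀ᶠ z in nhdsWithin y (Iic y), c < u0 z := (hlc y).eventually_const_lt hc
  have h2 : ∀ᶠ z in nhdsWithin y (Ici y), c < u0 z := by
    filter_upwards [self_mem_nhdsWithin] with z hz
    exact lt_of_lt_of_le hc (hmono hz)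
  have := nhdsLE_sup_nhdsGE y
  rw [← this]
  rw [eventually_sup]
  exact ⟨h1, h2⟩

lemma u0_lb {u0 : ℝ → ℝ} (hmono : Monotone u0)
    (hgrowth : Tendsto (fun y => u0 y / y ^ 2) atBot (nhds 0)) :
    ∀ ε : ℝ, 0 < ε → ∃ C : ℝ, ∀ y, C - ε * y ^ 2 ≤ u0 y := by
  intro ε hε
  have h1 : ∀ᶠ y in atBot, |u0 y / y ^ 2| < ε := by
    have := hgrowth.eventually (eventually_abs_sub_lt 0 hε)
    simpa using this
  have h2 : ∀ᶠ y in atBot, y ≤ (-1:ℝ) := eventually_le_atBot (-1)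
  obtain ⟨A, hA⟩ := eventually_atBot.mp (h1.and h2)
  refine ⟨min (u0 A) 0, fun y => ?_⟩
  rcases le_or_gt y A with hy | hy
  · obtain ⟨habs, hneg⟩ := hA y hy
    have hy2 : (0:ℝ) < y ^ 2 := by nlinarith
    have : -ε < u0 y / y ^ 2 := (abs_lt.mp habs).1 |>.trans_le (le_refl _) |> (fun h => by linarith [(abs_lt.mp habs).1])
    have h3 : -ε * y ^ 2 < u0 y := by
      have := (div_lt_iff₀ hy2).mp ((abs_lt.mp habs).2)
      have := (lt_div_iff₀ hy2).mp (abs_lt.mp habs).1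
      nlinarith
    have : min (u0 A) 0 ≤ 0 := min_le_right _ _
    nlinarith
  · have h3 : u0 A ≤ u0 y := hmono hy.le
    have h4 : min (u0 A) 0 ≤ u0 A := min_le_left _ _
    nlinarith [sq_nonneg y]

lemma obj_lb {u0 : ℝ → ℝ} (hmono : Monotone u0)
    (hgrowth : Tendsto (fun y => u0 y / y ^ 2) atBot (nhds 0)) (x t : ℝ) (ht : 0 < t) :
    ∃ C : ℝ, ∀ y, C + y ^ 2 / (16 * t) ≤ u0 y + (x - y) ^ 2 / (4 * t) := by
  obtain ⟨C₁, hC₁⟩ := u0_lb hmono hgrowth (1 / (16 * t)) (by positivity)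
  refine ⟨C₁ - x ^ 2 / (2 * t), fun y => ?_⟩
  have h1 := hC₁ y
  have key : (0:ℝ) ≤ (x - y) ^ 2 / (4 * t) + x ^ 2 / (2 * t) - y ^ 2 / (8 * t) := by
    have h2 : (x - y) ^ 2 / (4 * t) + x ^ 2 / (2 * t) - y ^ 2 / (8 * t)
        = ((y - 2 * x) ^ 2 + 2 * x ^ 2) / (8 * t) := by field_simp; ring
    rw [h2]; positivity
  have h3 : (1 / (16 * t)) * y ^ 2 + y ^ 2 / (16 * t) = y ^ 2 / (8 * t) := by
    field_simp; ring
  nlinarith [h1, key]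

lemma hopfLax_zero (u0 : ℝ → ℝ) (y : ℝ) : hopfLax u0 y 0 = u0 y := if_pos rfl

lemma hopfLax_pos (u0 : ℝ → ℝ) (x : ℝ) {t : ℝ} (ht : 0 < t) :
    hopfLax u0 x t = sInf ((fun y => u0 y + (x - y) ^ 2 / (4 * t)) '' Iic x) :=
  if_neg ht.ne'

lemma image_nonempty (u0 : ℝ → ℝ) (x t : ℝ) :
    ((fun y => u0 y + (x - y) ^ 2 / (4 * t)) '' Iic x).Nonempty :=
  (nonempty_Iic).image _

lemma image_bddBelow {u0 : ℝ → ℝ} (hmono : Monotone u0)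
    (hgrowth : Tendsto (fun y => u0 y / y ^ 2) atBot (nhds 0)) (x : ℝ) {t : ℝ} (ht : 0 < t) :
    BddBelow ((fun y => u0 y + (x - y) ^ 2 / (4 * t)) '' Iic x) := by
  obtain ⟨C, hC⟩ := obj_lb hmono hgrowth x t ht
  refine ⟨C, fun v hv => ?_⟩
  obtain ⟨y, _, rfl⟩ := hv
  have := hC y
  nlinarith [sq_nonneg y, (by positivity : (0:ℝ) < 16 * t), div_nonneg (sq_nonneg y) (by positivity : (0:ℝ) ≤ 16 * t)]

lemma hopfLax_le0 {u0 : ℝ → ℝ} (hmono : Monotone u0)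
    (hgrowth : Tendsto (fun y => u0 y / y ^ 2) atBot (nhds 0)) {x y t : ℝ} (ht : 0 < t)
    (hxy : y ≤ x) : hopfLax u0 x t ≤ u0 y + (x - y) ^ 2 / (4 * t) := by
  rw [hopfLax_pos u0 x ht]
  exact csInf_le (image_bddBelow hmono hgrowth x ht) ⟨y, hxy, rfl⟩

lemma mem_minSet0_iff (u0 : ℝ → ℝ) (x t y : ℝ) :
    y ∈ minSet u0 x 0 t ↔ y ≤ x ∧ hopfLax u0 x t = u0 y + (x - y) ^ 2 / (4 * t) := by
  simp [minSet, hopfLax_zero]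

lemma minSet0_basic {u0 : ℝ → ℝ} (hmono : Monotone u0)
    (hlc : ∀ y : ℝ, ContinuousWithinAt u0 (Iic y) y)
    (hgrowth : Tendsto (fun y => u0 y / y ^ 2) atBot (nhds 0)) (x : ℝ) {t : ℝ} (ht : 0 < t) :
    (minSet u0 x 0 t).Nonempty ∧ IsClosed (minSet u0 x 0 t) ∧
      BddBelow (minSet u0 x 0 t) ∧ BddAbove (minSet u0 x 0 t) := by
  obtain ⟨C, hC⟩ := obj_lb hmono hgrowth x t ht
  set F : ℝ → ℝ := fun y => u0 y + (x - y) ^ 2 / (4 * t) with hF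
  set K : ℝ := 16 * t * (1 + |u0 x| + |C|) + 1 with hK
  have hK1 : (1:ℝ) ≤ K := by
    have : (0:ℝ) ≤ 16 * t * (1 + |u0 x| + |C|) := by positivity
    linarith
  have hbig : ∀ y : ℝ, y ≤ -K → u0 x + 1 ≤ F y := by
    intro y hy
    have h1 := hC y
    have hy2 : K ^ 2 ≤ y ^ 2 := by nlinarith
    have hKK : K ≤ K ^ 2 := by nlinarith
    have h2 : K / (16 * t) ≤ y ^ 2 / (16 * t) :=
      (div_le_div_iff_of_pos_right (by positivity : (0:ℝ) < 16 * t)).mpr (hKK.trans hy2)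
    have h4 : K / (16 * t) = (1 + |u0 x| + |C|) + 1 / (16 * t) := by
      rw [hK]; field_simp
    have h5 : (0:ℝ) ≤ 1 / (16 * t) := by positivity
    have hFy : F y = u0 y + (x - y) ^ 2 / (4 * t) := rfl
    rw [hFy]
    nlinarith [le_abs_self (u0 x), neg_abs_le C]
  -- the minimum point
  set R : ℝ := min x (-K) with hR
  have hRx : R ≤ x := min_le_left _ _
  have hFlsc : LowerSemicontinuous F := by
    apply LowerSemicontinuous.add (mono_lc_lsc hmono hlc)
    exact (Continuous.lowerSemicontinuous (by continuity))
  obtain ⟨y₀, hy₀mem, hy₀min⟩ := lsc_exists_min (isCompact_Icc (a := R) (b := x))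
    (nonempty_Icc.mpr hRx) hFlsc
  have hlow : ∀ z ∈ Iic x, F y₀ ≤ F z := by
    intro z hz
    rcases le_or_gt R z with h | h
    · exact hy₀min z ⟨h, hz⟩
    · have hzK : z ≤ -K := le_of_lt (lt_of_lt_of_le h (min_le_right _ _))
      have := hbig z hzK
      have hFx : F y₀ ≤ F x := hy₀min x ⟨hRx, le_refl x⟩
      have : F x = u0 x + 0 := by rw [hF]; simp
      nlinarith [hy₀min x ⟨hRx, le_refl x⟩]
  have hmem : y₀ ∈ minSet u0 x 0 t := by
    rw [mem_minSet0_iff]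
    refine ⟨hy₀mem.2, le_antisymm ?_ ?_⟩
    · exact hopfLax_le0 hmono hgrowth ht hy₀mem.2
    · rw [hopfLax_pos u0 x ht]
      exact le_csInf (image_nonempty u0 x t) (by rintro v ⟨z, hz, rfl⟩; exact hlow z hz)
  have hsub : minSet u0 x 0 t ⊆ Icc R x := by
    intro y hy
    rw [mem_minSet0_iff] at hy
    refine ⟨?_, hy.1⟩
    by_contra hcon
    push_neg at hcon
    have hyK : y ≤ -K := le_of_lt (lt_of_lt_of_le hcon (min_le_right _ _))
    have h6 := hbig y hyK
    have h7 : hopfLax u0 x t ≤ u0 x + (x - x) ^ 2 / (4 * t) :=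
      hopfLax_le0 hmono hgrowth ht (le_refl x)
    have h8 : (x - x) ^ 2 / (4 * t) = 0 := by simp
    have hFy : F y = u0 y + (x - y) ^ 2 / (4 * t) := rfl
    rw [hFy, ← hy.2] at h6
    rw [h8] at h7
    linarith
  have hclosed : IsClosed (minSet u0 x 0 t) := by
    have heq : minSet u0 x 0 t = Iic x ∩ F ⁻¹' (Iic (hopfLax u0 x t)) := by
      ext y
      rw [mem_minSet0_iff]
      constructor
      · rintro ⟨h1, h2⟩; exact ⟨h1, by simp [hF, ← h2]⟩
      · rintro ⟨h1, h2⟩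
        simp only [mem_preimage, mem_Iic] at h2
        exact ⟨h1, le_antisymm (hopfLax_le0 hmono hgrowth ht h1) h2⟩
    rw [heq]
    exact isClosed_Iic.inter (hFlsc.isClosed_preimage _)
  exact ⟨⟨y₀, hmem⟩, hclosed, (bddBelow_Icc).mono hsub, (bddAbove_Icc).mono hsub⟩

lemma yminus_mem0 {u0 : ℝ → ℝ} (hmono : Monotone u0)
    (hlc : ∀ y : ℝ, ContinuousWithinAt u0 (Iic y) y)
    (hgrowth : Tendsto (fun y => u0 y / y ^ 2) atBot (nhds 0)) (x : ℝ) {t : ℝ} (ht : 0 < t) :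
    yminus u0 x 0 t ∈ minSet u0 x 0 t := by
  obtain ⟨hne, hcl, hbb, hba⟩ := minSet0_basic hmono hlc hgrowth x ht
  exact hcl.csInf_mem hne hbb

lemma yplus_mem0 {u0 : ℝ → ℝ} (hmono : Monotone u0)
    (hlc : ∀ y : ℝ, ContinuousWithinAt u0 (Iic y) y)
    (hgrowth : Tendsto (fun y => u0 y / y ^ 2) atBot (nhds 0)) (x : ℝ) {t : ℝ} (ht : 0 < t) :
    yplus u0 x 0 t ∈ minSet u0 x 0 t := by
  obtain ⟨hne, hcl, hbb, hba⟩ := minSet0_basic hmono hlc hgrowth x ht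
  exact hcl.csSup_mem hne hba

/-- Semigroup upper bound: `u(x₁,t₁) ≤ u(z,t) + (x₁-z)²/(4(t₁-t))` for `z ≤ x₁`. -/
lemma semigroup_le {u0 : ℝ → ℝ} (hmono : Monotone u0)
    (hgrowth : Tendsto (fun y => u0 y / y ^ 2) atBot (nhds 0)) {x₁ z t t₁ : ℝ}
    (ht : 0 < t) (htt : t < t₁) (hz : z ≤ x₁) :
    hopfLax u0 x₁ t₁ ≤ hopfLax u0 z t + (x₁ - z) ^ 2 / (4 * (t₁ - t)) := by
  have ht₁ : 0 < t₁ := ht.trans htt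
  have key : ∀ y ∈ Iic z,
      hopfLax u0 x₁ t₁ - (x₁ - z) ^ 2 / (4 * (t₁ - t)) ≤ u0 y + (z - y) ^ 2 / (4 * t) := by
    intro y hy
    have h1 : hopfLax u0 x₁ t₁ ≤ u0 y + (x₁ - y) ^ 2 / (4 * t₁) :=
      hopfLax_le0 hmono hgrowth ht₁ (hy.trans hz)
    have h2 := quad_le t (t₁ - t) (z - y) (x₁ - z) ht (by linarith)
    have h3 : (z - y) + (x₁ - z) = x₁ - y := by ring
    have h4 : t + (t₁ - t) = t₁ := by ring
    rw [h3, h4] at h2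
    linarith
  have h5 : hopfLax u0 x₁ t₁ - (x₁ - z) ^ 2 / (4 * (t₁ - t)) ≤ hopfLax u0 z t := by
    rw [hopfLax_pos u0 z ht]
    exact le_csInf (image_nonempty u0 z t) (by rintro v ⟨y, hy, rfl⟩; exact key y hy)
  linarith

/-- Monotonicity of minimizers (generic in the lower level `s`). -/
lemma minSet_mono_generic {u0 : ℝ → ℝ} {x x' s τ y y' : ℝ} (hd : s < τ)
    (hub : ∀ z ≤ x, hopfLax u0 x τ ≤ hopfLax u0 z s + (x - z) ^ 2 / (4 * (τ - s)))
    (hub' : ∀ z ≤ x', hopfLax u0 x' τ ≤ hopfLax u0 z s + (x' - z) ^ 2 / (4 * (τ - s)))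
    (hxx : x < x') (hy : y ∈ minSet u0 x s τ) (hy' : y' ∈ minSet u0 x' s τ) : y ≤ y' := by
  by_contra hcon
  push_neg at hcon
  obtain ⟨hyx, heq⟩ := hy
  obtain ⟨hyx', heq'⟩ := hy'
  have h1 := hub y' (hcon.le.trans hyx)
  have h2 := hub' y (hyx.trans hxx.le)
  set d := τ - s with hdd
  have hdpos : (0:ℝ) < d := by simp [hdd]; linarith
  have k2 : (x - y) ^ 2 / (4 * d) + (x' - y') ^ 2 / (4 * d)
      ≤ (x - y') ^ 2 / (4 * d) + (x' - y) ^ 2 / (4 * d) := by linarith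
  rw [← add_div, ← add_div, div_le_div_iff₀ (by positivity) (by positivity)] at k2
  nlinarith [k2, mul_pos (sub_pos.mpr hxx) (sub_pos.mpr hcon), (by positivity : (0:ℝ) < 4 * d)]

/-- the straight-line interpolation point -/
noncomputable def interp (x₁ t t₁ y : ℝ) : ℝ := ((t₁ - t) * y + t * x₁) / t₁

lemma interp_identity {t t₁ : ℝ} (ht : 0 < t) (htt : t < t₁) (x₁ y : ℝ) :
    (interp x₁ t t₁ y - y) ^ 2 / (4 * t) + (x₁ - interp x₁ t t₁ y) ^ 2 / (4 * (t₁ - t))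
      = (x₁ - y) ^ 2 / (4 * t₁) := by
  have ht₁ : (0:ℝ) < t₁ := ht.trans htt
  have h1 : interp x₁ t t₁ y - y = t / t₁ * (x₁ - y) := by
    rw [interp]; field_simp; ring
  have h2 : x₁ - interp x₁ t t₁ y = (t₁ - t) / t₁ * (x₁ - y) := by
    rw [interp]; field_simp; ring
  rw [h1, h2]
  have ht' : t₁ - t ≠ 0 := by linarith
  field_simp
  ring

lemma interp_mem {t t₁ : ℝ} (ht : 0 < t) (htt : t < t₁) {x₁ y : ℝ} (hy : y ≤ x₁) :
    y ≤ interp x₁ t t₁ y ∧ interp x₁ t t₁ y ≤ x₁ := by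
  have ht₁ : (0:ℝ) < t₁ := ht.trans htt
  constructor
  · rw [interp, le_div_iff₀ ht₁]; nlinarith
  · rw [interp, div_le_iff₀ ht₁]; nlinarith

/-- Composition: a minimizer at time t₁ generates a minimizer structure through time t. -/
lemma comp_mem {u0 : ℝ → ℝ} (hmono : Monotone u0)
    (hgrowth : Tendsto (fun y => u0 y / y ^ 2) atBot (nhds 0)) {x₁ t t₁ y : ℝ}
    (ht : 0 < t) (htt : t < t₁) (hy : y ∈ minSet u0 x₁ 0 t₁) :
    interp x₁ t t₁ y ∈ minSet u0 x₁ t t₁ ∧ y ∈ minSet u0 (interp x₁ t t₁ y) 0 t := by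
  have ht₁ : (0:ℝ) < t₁ := ht.trans htt
  rw [mem_minSet0_iff] at hy
  obtain ⟨hyx, heq⟩ := hy
  set z := interp x₁ t t₁ y with hz
  obtain ⟨hyz, hzx⟩ := interp_mem ht htt hyx
  have hid := interp_identity ht htt x₁ y
  have h1 : hopfLax u0 z t ≤ u0 y + (z - y) ^ 2 / (4 * t) := hopfLax_le0 hmono hgrowth ht hyz
  have h2 : hopfLax u0 x₁ t₁ ≤ hopfLax u0 z t + (x₁ - z) ^ 2 / (4 * (t₁ - t)) :=
    semigroup_le hmono hgrowth ht htt hzx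
  have h3 : hopfLax u0 x₁ t₁ = u0 y + (z - y) ^ 2 / (4 * t) + (x₁ - z) ^ 2 / (4 * (t₁ - t)) := by
    rw [heq, ← hid]; ring
  have e1 : hopfLax u0 z t = u0 y + (z - y) ^ 2 / (4 * t) := by linarith
  have e2 : hopfLax u0 x₁ t₁ = hopfLax u0 z t + (x₁ - z) ^ 2 / (4 * (t₁ - t)) := by linarith
  refine ⟨⟨hzx, by rw [e2]⟩, ?_⟩
  rw [mem_minSet0_iff]
  exact ⟨hyz, e1⟩

/-- Decomposition: chained minimizers compose and lie on a straight line. -/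
lemma decomp {u0 : ℝ → ℝ} (hmono : Monotone u0)
    (hgrowth : Tendsto (fun y => u0 y / y ^ 2) atBot (nhds 0)) {x₁ t t₁ z y : ℝ}
    (ht : 0 < t) (htt : t < t₁) (hzmem : z ∈ minSet u0 x₁ t t₁)
    (hymem : y ∈ minSet u0 z 0 t) :
    y ∈ minSet u0 x₁ 0 t₁ ∧ z = interp x₁ t t₁ y := by
  have ht₁ : (0:ℝ) < t₁ := ht.trans htt
  obtain ⟨hzx, heqz⟩ := hzmem
  rw [mem_minSet0_iff] at hymem
  obtain ⟨hyz, heqy⟩ := hymem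
  have hq := quad_le t (t₁ - t) (z - y) (x₁ - z) ht (by linarith)
  have h3 : (z - y) + (x₁ - z) = x₁ - y := by ring
  have h4 : t + (t₁ - t) = t₁ := by ring
  rw [h3, h4] at hq
  have h5 : hopfLax u0 x₁ t₁ ≤ u0 y + (x₁ - y) ^ 2 / (4 * t₁) :=
    hopfLax_le0 hmono hgrowth ht₁ (hyz.trans hzx)
  have h6 : hopfLax u0 x₁ t₁ = u0 y + (z - y) ^ 2 / (4 * t) + (x₁ - z) ^ 2 / (4 * (t₁ - t)) := by
    rw [heqz, heqy]
  have heqq : (z - y) ^ 2 / (4 * t) + (x₁ - z) ^ 2 / (4 * (t₁ - t))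
      = (x₁ - y) ^ 2 / (4 * t₁) := by linarith
  have hline := quad_eq_case t (t₁ - t) (z - y) (x₁ - z) ht (by linarith) (by rw [heqq, h3, h4])
  have hzval : z = interp x₁ t t₁ y := by
    rw [interp]
    field_simp
    nlinarith [hline]
  refine ⟨?_, hzval⟩
  rw [mem_minSet0_iff]
  exact ⟨hyz.trans hzx, by linarith⟩

lemma interp_strictMono {t t₁ : ℝ} (ht : 0 < t) (htt : t < t₁) (x₁ : ℝ) :
    StrictMono (interp x₁ t t₁) := by
  intro a b hab
  have ht₁ : (0:ℝ) < t₁ := ht.trans htt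
  rw [interp, interp, div_lt_div_iff₀ ht₁ ht₁]
  nlinarith [mul_pos (mul_pos (sub_pos.mpr htt) (sub_pos.mpr hab)) ht₁]

lemma minSet_image {u0 : ℝ → ℝ} (hmono : Monotone u0)
    (hlc : ∀ y : ℝ, ContinuousWithinAt u0 (Iic y) y)
    (hgrowth : Tendsto (fun y => u0 y / y ^ 2) atBot (nhds 0)) {x₁ t t₁ : ℝ}
    (ht : 0 < t) (htt : t < t₁) :
    minSet u0 x₁ t t₁ = interp x₁ t t₁ '' minSet u0 x₁ 0 t₁ := by
  ext z
  constructor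
  · intro hz
    obtain ⟨⟨y, hy⟩, -, -, -⟩ := minSet0_basic hmono hlc hgrowth z ht
    obtain ⟨hy1, hy2⟩ := decomp hmono hgrowth ht htt hz hy
    exact ⟨y, hy1, hy2.symm⟩
  · rintro ⟨y, hy, rfl⟩
    exact (comp_mem hmono hgrowth ht htt hy).1

lemma yminus_t_eq {u0 : ℝ → ℝ} (hmono : Monotone u0)
    (hlc : ∀ y : ℝ, ContinuousWithinAt u0 (Iic y) y)
    (hgrowth : Tendsto (fun y => u0 y / y ^ 2) atBot (nhds 0)) {x₁ t t₁ : ℝ}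
    (ht : 0 < t) (htt : t < t₁) :
    yminus u0 x₁ t t₁ = interp x₁ t t₁ (yminus u0 x₁ 0 t₁) := by
  have ht₁ : (0:ℝ) < t₁ := ht.trans htt
  obtain ⟨hne, hcl, hbb, hba⟩ := minSet0_basic hmono hlc hgrowth x₁ ht₁
  have himg := minSet_image hmono hlc hgrowth (x₁ := x₁) ht htt
  have hmem : yminus u0 x₁ 0 t₁ ∈ minSet u0 x₁ 0 t₁ := hcl.csInf_mem hne hbb
  rw [yminus, himg]
  apply le_antisymm
  · exact csInf_le (Monotone.map_bddBelow (interp_strictMono ht htt x₁).monotone hbb)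
      ⟨_, hmem, rfl⟩
  · apply le_csInf (hne.image _)
    rintro v ⟨y, hy, rfl⟩
    exact (interp_strictMono ht htt x₁).monotone (csInf_le hbb hy)

lemma yplus_t_eq {u0 : ℝ → ℝ} (hmono : Monotone u0)
    (hlc : ∀ y : ℝ, ContinuousWithinAt u0 (Iic y) y)
    (hgrowth : Tendsto (fun y => u0 y / y ^ 2) atBot (nhds 0)) {x₁ t t₁ : ℝ}
    (ht : 0 < t) (htt : t < t₁) :
    yplus u0 x₁ t t₁ = interp x₁ t t₁ (yplus u0 x₁ 0 t₁) := by
  have ht₁ : (0:ℝ) < t₁ := ht.trans htt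
  obtain ⟨hne, hcl, hbb, hba⟩ := minSet0_basic hmono hlc hgrowth x₁ ht₁
  have himg := minSet_image hmono hlc hgrowth (x₁ := x₁) ht htt
  have hmem : yplus u0 x₁ 0 t₁ ∈ minSet u0 x₁ 0 t₁ := hcl.csSup_mem hne hba
  rw [yplus, himg]
  apply le_antisymm
  · apply csSup_le (hne.image _)
    rintro v ⟨y, hy, rfl⟩
    exact (interp_strictMono ht htt x₁).monotone (le_csSup hba hy)
  · exact le_csSup (Monotone.map_bddAbove (interp_strictMono ht htt x₁).monotone hba)
      ⟨_, hmem, rfl⟩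

/-- points in any forward minimizer set have a unique backward minimizer,
hence cannot be shocks -/
lemma no_shock {u0 : ℝ → ℝ} (hmono : Monotone u0)
    (hlc : ∀ y : ℝ, ContinuousWithinAt u0 (Iic y) y)
    (hgrowth : Tendsto (fun y => u0 y / y ^ 2) atBot (nhds 0)) {x t t₁ ξ : ℝ}
    (ht : 0 < t) (htt : t < t₁) (hJ : yminus u0 x 0 t < yplus u0 x 0 t) :
    x ∉ minSet u0 ξ t t₁ := by
  intro hx
  have h1 := decomp hmono hgrowth ht htt hx (yminus_mem0 hmono hlc hgrowth x ht)
  have h2 := decomp hmono hgrowth ht htt hx (yplus_mem0 hmono hlc hgrowth x ht)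
  have := (interp_strictMono ht htt ξ).injective (h1.2.symm.trans h2.2)
  exact absurd this hJ.ne

lemma hub0 {u0 : ℝ → ℝ} (hmono : Monotone u0)
    (hgrowth : Tendsto (fun y => u0 y / y ^ 2) atBot (nhds 0)) {x τ : ℝ} (hτ : 0 < τ) :
    ∀ z ≤ x, hopfLax u0 x τ ≤ hopfLax u0 z 0 + (x - z) ^ 2 / (4 * (τ - 0)) := by
  intro z hz
  rw [hopfLax_zero, sub_zero]
  exact hopfLax_le0 hmono hgrowth hτ hz

lemma hopfLax_mono_x {u0 : ℝ → ℝ} (hmono : Monotone u0)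
    (hgrowth : Tendsto (fun y => u0 y / y ^ 2) atBot (nhds 0)) {x x' t : ℝ}
    (ht : 0 < t) (hxx : x ≤ x') : hopfLax u0 x t ≤ hopfLax u0 x' t := by
  rw [hopfLax_pos u0 x' ht]
  apply le_csInf (image_nonempty u0 x' t)
  rintro v ⟨y', hy', rfl⟩
  have h1 : y' - (x' - x) ≤ x := by simp only [mem_Iic] at hy'; linarith
  have h2 := hopfLax_le0 hmono hgrowth ht h1
  have h3 : u0 (y' - (x' - x)) ≤ u0 y' := hmono (by linarith)
  have h4 : (x - (y' - (x' - x))) ^ 2 = (x' - y') ^ 2 := by ring_nf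
  rw [h4] at h2
  linarith

lemma key_est {u0 : ℝ → ℝ} (hmono : Monotone u0)
    (hlc : ∀ y : ℝ, ContinuousWithinAt u0 (Iic y) y)
    (hgrowth : Tendsto (fun y => u0 y / y ^ 2) atBot (nhds 0)) {u v t x₀ : ℝ}
    (ht : 0 < t) (h1 : x₀ - 1 < u) (huv : u ≤ v) (hv : v ≤ x₀ + 1) :
    hopfLax u0 v t - hopfLax u0 u t
      ≤ (v - u) * (4 * |x₀| + 4 + 2 * |yminus u0 (x₀ - 1) 0 t|) / (4 * t) := by
  set c := yminus u0 (x₀ - 1) 0 t with hc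
  set y := yminus u0 u 0 t with hy
  have hymem : y ∈ minSet u0 u 0 t := yminus_mem0 hmono hlc hgrowth u ht
  have hcmem : c ∈ minSet u0 (x₀ - 1) 0 t := yminus_mem0 hmono hlc hgrowth (x₀ - 1) ht
  have hyc : c ≤ y := minSet_mono_generic (by linarith : (0:ℝ) < t)
    (hub0 hmono hgrowth ht) (hub0 hmono hgrowth ht) h1 hcmem hymem
  have hyu : y ≤ u := hymem.1
  have heq : hopfLax u0 u t = u0 y + (u - y) ^ 2 / (4 * t) := ((mem_minSet0_iff u0 u t y).mp hymem).2
  have hle : hopfLax u0 v t ≤ u0 y + (v - y) ^ 2 / (4 * t) :=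
    hopfLax_le0 hmono hgrowth ht (hyu.trans huv)
  have hdiff : hopfLax u0 v t - hopfLax u0 u t ≤ ((v - y) ^ 2 - (u - y) ^ 2) / (4 * t) := by
    have h9 : (v - y) ^ 2 / (4 * t) - (u - y) ^ 2 / (4 * t)
        = ((v - y) ^ 2 - (u - y) ^ 2) / (4 * t) := div_sub_div_same _ _ _
    rw [heq]
    linarith
  have hexp : (v - y) ^ 2 - (u - y) ^ 2 = (v - u) * (v + u - 2 * y) := by ring
  have habs : v + u - 2 * y ≤ 4 * |x₀| + 4 + 2 * |c| := by
    have hxa := le_abs_self x₀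
    have hxb := neg_abs_le x₀
    have hca := neg_abs_le c
    have : -(|x₀| + 1 + |c|) ≤ y := by nlinarith
    nlinarith
  have hvu : 0 ≤ v - u := by linarith
  calc hopfLax u0 v t - hopfLax u0 u t ≤ ((v - y) ^ 2 - (u - y) ^ 2) / (4 * t) := hdiff
    _ ≤ (v - u) * (4 * |x₀| + 4 + 2 * |c|) / (4 * t) := by
        rw [hexp]
        exact div_le_div_of_nonneg_right (mul_le_mul_of_nonneg_left habs hvu) (by positivity)

lemma hopfLax_cont {u0 : ℝ → ℝ} (hmono : Monotone u0)
    (hlc : ∀ y : ℝ, ContinuousWithinAt u0 (Iic y) y)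
    (hgrowth : Tendsto (fun y => u0 y / y ^ 2) atBot (nhds 0)) {t : ℝ} (ht : 0 < t) :
    Continuous (fun x => hopfLax u0 x t) := by
  rw [continuous_iff_continuousAt]
  intro x₀
  rw [Metric.continuousAt_iff]
  intro ε hε
  set K : ℝ := 4 * |x₀| + 4 + 2 * |yminus u0 (x₀ - 1) 0 t| with hK
  have hKpos : (0:ℝ) < K := by positivity
  refine ⟨min 1 (ε * (4 * t) / (2 * K)), by positivity, ?_⟩
  intro x hx
  rw [Real.dist_eq] at hx ⊢
  have hx1 : |x - x₀| < 1 := lt_of_lt_of_le hx (min_le_left _ _)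
  have hx2 : |x - x₀| < ε * (4 * t) / (2 * K) := lt_of_lt_of_le hx (min_le_right _ _)
  have habs := abs_lt.mp hx1
  have h8 : |x - x₀| * K / (4 * t) < ε := by
    rw [div_lt_iff₀ (by positivity : (0:ℝ) < 4 * t)]
    have h9 : |x - x₀| * K < (ε * (4 * t) / (2 * K)) * K := mul_lt_mul_of_pos_right hx2 hKpos
    have h10 : (ε * (4 * t) / (2 * K)) * K = ε * (4 * t) / 2 := by field_simp
    nlinarith [mul_pos hε (by positivity : (0:ℝ) < 4 * t)]
  have key : ∀ u v : ℝ, x₀ - 1 < u → u ≤ v → v ≤ x₀ + 1 →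
      hopfLax u0 v t - hopfLax u0 u t ≤ (v - u) * K / (4 * t) := by
    intro u v h1 h2 h3
    exact key_est hmono hlc hgrowth ht h1 h2 h3
  rcases le_total x x₀ with hc | hc
  · have h4 := key x x₀ (by linarith [habs.1]) hc (by linarith)
    have h5 : hopfLax u0 x t ≤ hopfLax u0 x₀ t := hopfLax_mono_x hmono hgrowth ht hc
    rw [abs_of_nonpos (by linarith)]
    have h6 : x₀ - x ≤ |x - x₀| := by rw [abs_sub_comm]; exact le_abs_self _
    have h7 : (x₀ - x) * K / (4 * t) ≤ |x - x₀| * K / (4 * t) :=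
      div_le_div_of_nonneg_right (mul_le_mul_of_nonneg_right h6 hKpos.le) (by positivity)
    linarith
  · have h4 := key x₀ x (by linarith) hc (by linarith [habs.2])
    have h5 : hopfLax u0 x₀ t ≤ hopfLax u0 x t := hopfLax_mono_x hmono hgrowth ht hc
    rw [abs_of_nonneg (by linarith)]
    have h6 : x - x₀ ≤ |x - x₀| := le_abs_self _
    have h7 : (x - x₀) * K / (4 * t) ≤ |x - x₀| * K / (4 * t) :=
      div_le_div_of_nonneg_right (mul_le_mul_of_nonneg_right h6 hKpos.le) (by positivity)
    linarith

lemma hopfLax_lb {u0 : ℝ → ℝ} (hmono : Monotone u0)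
    (hgrowth : Tendsto (fun y => u0 y / y ^ 2) atBot (nhds 0)) {t : ℝ} (ht : 0 < t) :
    ∀ ε : ℝ, 0 < ε → ∃ C : ℝ, ∀ z, C - ε * z ^ 2 ≤ hopfLax u0 z t := by
  intro ε hε
  set ε₀ : ℝ := min (ε / 2) (1 / (8 * t)) with hε₀
  have hε₀pos : 0 < ε₀ := lt_min (by linarith) (by positivity)
  obtain ⟨C, hC⟩ := u0_lb hmono hgrowth ε₀ hε₀pos
  refine ⟨C, fun z => ?_⟩
  rw [hopfLax_pos u0 z ht]
  apply le_csInf (image_nonempty u0 z t)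
  rintro v ⟨y, hy, rfl⟩
  have h1 := hC y
  have h2 : ε₀ ≤ ε / 2 := min_le_left _ _
  have h3 : ε₀ ≤ 1 / (8 * t) := min_le_right _ _
  have h4 : (0:ℝ) ≤ (z - y) ^ 2 / (4 * t) - 2 * ε₀ * (z - y) ^ 2 := by
    have h5 : 2 * ε₀ * (z - y) ^ 2 ≤ 2 * (1 / (8 * t)) * (z - y) ^ 2 := by nlinarith [sq_nonneg (z - y)]
    have h6 : 2 * (1 / (8 * t)) * (z - y) ^ 2 ≤ (z - y) ^ 2 / (4 * t) := by
      rw [div_eq_mul_inv, div_eq_mul_inv]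
      ring_nf
      nlinarith [sq_nonneg (z - y), mul_pos ht ht]
    linarith
  nlinarith [mul_nonneg hε₀pos.le (sq_nonneg (y - 2 * z)),
    mul_nonneg (by linarith : (0:ℝ) ≤ ε - 2 * ε₀) (sq_nonneg z)]

/-- Forward coercivity: minimizers from far to the right stay to the right of `a`. -/
lemma forward_coercive {u0 : ℝ → ℝ} (hmono : Monotone u0)
    (hgrowth : Tendsto (fun y => u0 y / y ^ 2) atBot (nhds 0)) {t t₁ : ℝ}
    (ht : 0 < t) (htt : t < t₁) (a : ℝ) :
    ∃ X : ℝ, ∀ x', X ≤ x' → ∀ z ∈ minSet u0 x' t t₁, a < z := by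
  set s : ℝ := t₁ - t with hs
  have hspos : (0:ℝ) < s := by simp [hs]; linarith
  obtain ⟨C, hC⟩ := hopfLax_lb hmono hgrowth ht (1 / (8 * s)) (by positivity)
  set H : ℝ := hopfLax u0 (a + 1) t with hH
  set B : ℝ := H - C + a ^ 2 / (8 * s) with hB
  refine ⟨max (|a| + 1) (a + (4 * s * B + 1) / 2 + 1), fun x' hx' z hz => ?_⟩
  by_contra hcon
  push_neg at hcon
  have hx1 : |a| + 1 ≤ x' := le_trans (le_max_left _ _) hx'
  have hx2 : a + (4 * s * B + 1) / 2 + 1 ≤ x' := le_trans (le_max_right _ _) hx'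
  obtain ⟨hzx, heq⟩ := hz
  have hax : a + 1 ≤ x' := by
    have := le_abs_self a; linarith
  have hsg : hopfLax u0 x' t₁ ≤ H + (x' - a - 1) ^ 2 / (4 * s) := by
    have h7 := semigroup_le hmono hgrowth ht htt hax
    have e : x' - (a + 1) = x' - a - 1 := by ring
    rw [e, ← hs] at h7
    exact h7
  have hlb := hC z
  have ha2x : z + a - 4 * x' ≤ 0 := by
    have h1 := le_abs_self a
    have h2 : (0:ℝ) ≤ |a| := abs_nonneg a
    linarith
  have key1 : (x' - z) ^ 2 / (4 * s) - z ^ 2 / (8 * s)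
      - ((x' - a) ^ 2 / (4 * s) - a ^ 2 / (8 * s))
      = ((z - a) * (z + a - 4 * x')) / (8 * s) := by
    field_simp
    ring
  have key1nn : (0:ℝ) ≤ ((z - a) * (z + a - 4 * x')) / (8 * s) :=
    div_nonneg (by nlinarith) (by positivity)
  have key2 : (x' - a) ^ 2 / (4 * s) - (x' - a - 1) ^ 2 / (4 * s)
      = (2 * (x' - a) - 1) / (4 * s) := by
    rw [div_sub_div_same]
    congr 1
    ring
  have hmain : (2 * (x' - a) - 1) / (4 * s) ≤ B := by
    have e1 : hopfLax u0 x' t₁ = hopfLax u0 z t + (x' - z) ^ 2 / (4 * s) := by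
      rw [heq]
    have : C - z ^ 2 / (8 * s) ≤ hopfLax u0 z t := by
      have h0 := hC z
      have e : 1 / (8 * s) * z ^ 2 = z ^ 2 / (8 * s) := by ring
      linarith
    rw [hB]
    linarith [key1, key1nn, key2, hsg]
  have hgrow : B + 1 / (2 * s) ≤ (2 * (x' - a) - 1) / (4 * s) := by
    have e2 : (2 * ((a + (4 * s * B + 1) / 2 + 1) - a) - 1) / (4 * s) = B + 1 / (2 * s) := by
      field_simp
      ring
    rw [← e2]
    apply div_le_div_of_nonneg_right (by linarith) (by positivity)
  have : (0:ℝ) < 1 / (2 * s) := by positivity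
  linarith

lemma zminus_mem {u0 : ℝ → ℝ} (hmono : Monotone u0)
    (hlc : ∀ y : ℝ, ContinuousWithinAt u0 (Iic y) y)
    (hgrowth : Tendsto (fun y => u0 y / y ^ 2) atBot (nhds 0)) {t t₁ : ℝ} (ξ : ℝ)
    (ht : 0 < t) (htt : t < t₁) : yminus u0 ξ t t₁ ∈ minSet u0 ξ t t₁ := by
  rw [yminus_t_eq hmono hlc hgrowth ht htt, minSet_image hmono hlc hgrowth ht htt]
  exact ⟨_, yminus_mem0 hmono hlc hgrowth ξ (ht.trans htt), rfl⟩

lemma zplus_mem {u0 : ℝ → ℝ} (hmono : Monotone u0)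
    (hlc : ∀ y : ℝ, ContinuousWithinAt u0 (Iic y) y)
    (hgrowth : Tendsto (fun y => u0 y / y ^ 2) atBot (nhds 0)) {t t₁ : ℝ} (ξ : ℝ)
    (ht : 0 < t) (htt : t < t₁) : yplus u0 ξ t t₁ ∈ minSet u0 ξ t t₁ := by
  rw [yplus_t_eq hmono hlc hgrowth ht htt, minSet_image hmono hlc hgrowth ht htt]
  exact ⟨_, yplus_mem0 hmono hlc hgrowth ξ (ht.trans htt), rfl⟩

lemma minSet_t_bddBelow {u0 : ℝ → ℝ} (hmono : Monotone u0)
    (hlc : ∀ y : ℝ, ContinuousWithinAt u0 (Iic y) y)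
    (hgrowth : Tendsto (fun y => u0 y / y ^ 2) atBot (nhds 0)) {t t₁ : ℝ} (ξ : ℝ)
    (ht : 0 < t) (htt : t < t₁) :
    BddBelow (minSet u0 ξ t t₁) ∧ BddAbove (minSet u0 ξ t t₁) := by
  rw [minSet_image hmono hlc hgrowth ht htt]
  obtain ⟨-, -, hbb, hba⟩ := minSet0_basic hmono hlc hgrowth ξ (ht.trans htt)
  exact ⟨Monotone.map_bddBelow (interp_strictMono ht htt ξ).monotone hbb,
    Monotone.map_bddAbove (interp_strictMono ht htt ξ).monotone hba⟩

/-- monotonicity of forward minimizer sets across space -/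
lemma minSet_t_mono {u0 : ℝ → ℝ} (hmono : Monotone u0)
    (hgrowth : Tendsto (fun y => u0 y / y ^ 2) atBot (nhds 0)) {t t₁ ξ ξ' z z' : ℝ}
    (ht : 0 < t) (htt : t < t₁) (hξ : ξ < ξ')
    (hz : z ∈ minSet u0 ξ t t₁) (hz' : z' ∈ minSet u0 ξ' t t₁) : z ≤ z' :=
  minSet_mono_generic htt (fun w hw => semigroup_le hmono hgrowth ht htt hw)
    (fun w hw => semigroup_le hmono hgrowth ht htt hw) hξ hz hz'

/-- Shock persistence: a shock point at time t lies strictly inside some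
forward minimizer interval at time t₁. -/
lemma persistence {u0 : ℝ → ℝ} (hmono : Monotone u0)
    (hlc : ∀ y : ℝ, ContinuousWithinAt u0 (Iic y) y)
    (hgrowth : Tendsto (fun y => u0 y / y ^ 2) atBot (nhds 0)) {x t t₁ : ℝ}
    (ht : 0 < t) (htt : t < t₁) (hJ : yminus u0 x 0 t < yplus u0 x 0 t) :
    ∃ ξ, yminus u0 ξ t t₁ < x ∧ x < yplus u0 ξ t t₁ := by
  set zm : ℝ → ℝ := fun ξ => yminus u0 ξ t t₁ with hzm
  set zp : ℝ → ℝ := fun ξ => yplus u0 ξ t t₁ with hzp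
  have hmemm : ∀ ξ, zm ξ ∈ minSet u0 ξ t t₁ := fun ξ => zminus_mem hmono hlc hgrowth ξ ht htt
  have hmemp : ∀ ξ, zp ξ ∈ minSet u0 ξ t t₁ := fun ξ => zplus_mem hmono hlc hgrowth ξ ht htt
  have hzmle : ∀ ξ, zm ξ ≤ zp ξ := fun ξ =>
    le_csSup (minSet_t_bddBelow hmono hlc hgrowth ξ ht htt).2 (hmemm ξ)
  have hle : ∀ ξ, zm ξ ≤ ξ := fun ξ => (hmemm ξ).1
  by_contra hcon
  push_neg at hcon
  have hdich : ∀ ξ, zp ξ < x ∨ x < zm ξ := by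
    intro ξ
    rcases lt_or_ge (zp ξ) x with h | h
    · exact Or.inl h
    rcases lt_or_ge x (zm ξ) with h' | h'
    · exact Or.inr h'
    -- zm ξ ≤ x ≤ zp ξ
    have hxn : x ∉ minSet u0 ξ t t₁ := no_shock hmono hlc hgrowth ht htt hJ
    have h1 : zm ξ < x := lt_of_le_of_ne h' (by rintro rfl; exact hxn (hmemm ξ))
    have h2 : x < zp ξ := lt_of_le_of_ne h (by rintro rfl; exact hxn (hmemp ξ))
    exact absurd (hcon ξ h1) (not_le.mpr h2)
  set Q : Set ℝ := {ξ | x < zm ξ} with hQ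
  obtain ⟨X, hX⟩ := forward_coercive hmono hgrowth ht htt x
  have hQne : Q.Nonempty := ⟨X, hX X le_rfl _ (hmemm X)⟩
  have hQbdd : BddBelow Q := ⟨x, fun ξ hξ => le_of_lt (lt_of_lt_of_le hξ (hle ξ))⟩
  set ξstar : ℝ := sInf Q with hξstar
  have hup : ∀ ⦃ξ ξ'⦄, ξ ∈ Q → ξ < ξ' → ξ' ∈ Q := by
    intro ξ ξ' hmem hlt
    have : zp ξ ≤ zm ξ' := minSet_t_mono hmono hgrowth ht htt hlt (hmemp ξ) (hmemm ξ')
    exact lt_of_lt_of_le (lt_of_lt_of_le hmem (hzmle ξ)) this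
  have hbelow : ∀ ξ, ξ < ξstar → zp ξ < x := by
    intro ξ hξ
    rcases hdich ξ with h | h
    · exact h
    · exact absurd (csInf_le hQbdd h) (not_le.mpr hξ)
  have habove : ∀ ξ, ξstar < ξ → x < zm ξ := by
    intro ξ hξ
    obtain ⟨ξ'', hξ''Q, hlt⟩ := exists_lt_of_csInf_lt hQne hξ
    exact hup hξ''Q hlt
  have hs : (0:ℝ) < t₁ - t := by linarith
  have hcontt : Continuous (fun w => hopfLax u0 w t) := hopfLax_cont hmono hlc hgrowth ht
  have hcontt₁ : Continuous (fun w => hopfLax u0 w t₁) :=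
    hopfLax_cont hmono hlc hgrowth (ht.trans htt)
  have hseq : Tendsto (fun n : ℕ => (1:ℝ) / (n + 1)) atTop (nhds 0) :=
    tendsto_one_div_add_atTop_nhds_zero_nat
  rcases lt_or_ge x (zm ξstar) with hcase | hcase
  · -- ξstar ∈ Q essentially; approximate from the left
    set ξn : ℕ → ℝ := fun n => ξstar - 1 / (n + 1) with hξn
    have hξlt : ∀ n, ξn n < ξstar := by
      intro n
      have : (0:ℝ) < 1 / ((n:ℝ) + 1) := by positivity
      simp only [hξn]
      linarith
    have hξtend : Tendsto ξn atTop (nhds ξstar) := by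
      have h0 := (tendsto_const_nhds (x := ξstar) (f := atTop (α := ℕ))).sub hseq
      rw [sub_zero] at h0
      exact h0
    set zn : ℕ → ℝ := fun n => zp (ξn n) with hzn
    have hznx : ∀ n, zn n < x := fun n => hbelow _ (hξlt n)
    have hznmono : Monotone zn := by
      intro n m hnm
      rcases eq_or_lt_of_le hnm with rfl | h
      · exact le_rfl
      · have : ξn n < ξn m := by
          simp only [hξn]
          have h1 : (1:ℝ) / ((m:ℝ) + 1) < 1 / ((n:ℝ) + 1) := by
            apply one_div_lt_one_div_of_lt (by positivity)
            push_cast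
            have := (Nat.cast_lt (α := ℝ)).mpr h
            linarith
          linarith
        exact minSet_t_mono hmono hgrowth ht htt this (hmemp _) (hmemp _)
    have hbdd : BddAbove (range zn) := ⟨x, by rintro v ⟨n, rfl⟩; exact (hznx n).le⟩
    set zbar : ℝ := ⨆ n, zn n with hzbar
    have hztend : Tendsto zn atTop (nhds zbar) := tendsto_atTop_ciSup hznmono hbdd
    have hzbarx : zbar ≤ x := ciSup_le fun n => (hznx n).le
    have heqn : ∀ n, hopfLax u0 (ξn n) t₁
        = hopfLax u0 (zn n) t + (ξn n - zn n) ^ 2 / (4 * (t₁ - t)) := fun n => (hmemp (ξn n)).2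
    have hL : Tendsto (fun n => hopfLax u0 (ξn n) t₁) atTop (nhds (hopfLax u0 ξstar t₁)) :=
      (hcontt₁.tendsto ξstar).comp hξtend
    have hR : Tendsto (fun n => hopfLax u0 (zn n) t + (ξn n - zn n) ^ 2 / (4 * (t₁ - t)))
        atTop (nhds (hopfLax u0 zbar t + (ξstar - zbar) ^ 2 / (4 * (t₁ - t)))) := by
      exact ((hcontt.tendsto zbar).comp hztend).add (((hξtend.sub hztend).pow 2).div_const _)
    have heql : hopfLax u0 ξstar t₁ = hopfLax u0 zbar t + (ξstar - zbar) ^ 2 / (4 * (t₁ - t)) := by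
      apply tendsto_nhds_unique hL
      exact Tendsto.congr (fun n => (heqn n).symm) hR
    have hzbarmem : zbar ∈ minSet u0 ξstar t t₁ :=
      ⟨hzbarx.trans (le_of_lt (lt_of_lt_of_le hcase (hle ξstar))), heql⟩
    have : zm ξstar ≤ zbar := csInf_le (minSet_t_bddBelow hmono hlc hgrowth ξstar ht htt).1 hzbarmem
    linarith
  · -- zp ξstar ≤ zm ξstar ≤ x, hence by dichotomy zp ξstar < x; approximate from the right
    have hzpx : zp ξstar < x := by
      rcases hdich ξstar with h | h
      · exact h
      · exact absurd hcase (not_le.mpr h)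
    set ξn : ℕ → ℝ := fun n => ξstar + 1 / (n + 1) with hξn
    have hξlt : ∀ n, ξstar < ξn n := by
      intro n
      have : (0:ℝ) < 1 / ((n:ℝ) + 1) := by positivity
      simp only [hξn]
      linarith
    have hξtend : Tendsto ξn atTop (nhds ξstar) := by
      have h0 := (tendsto_const_nhds (x := ξstar) (f := atTop (α := ℕ))).add hseq
      rw [add_zero] at h0
      exact h0
    set zn : ℕ → ℝ := fun n => zm (ξn n) with hzn
    have hznx : ∀ n, x < zn n := fun n => habove _ (hξlt n)
    have hznanti : Antitone zn := by
      intro n m hnm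
      rcases eq_or_lt_of_le hnm with rfl | h
      · exact le_rfl
      · have : ξn m < ξn n := by
          simp only [hξn]
          have h1 : (1:ℝ) / ((m:ℝ) + 1) < 1 / ((n:ℝ) + 1) := by
            apply one_div_lt_one_div_of_lt (by positivity)
            push_cast
            have := (Nat.cast_lt (α := ℝ)).mpr h
            linarith
          linarith
        exact minSet_t_mono hmono hgrowth ht htt this (hmemm _) (hmemm _)
    have hbdd : BddBelow (range zn) := ⟨x, by rintro v ⟨n, rfl⟩; exact (hznx n).le⟩
    set zbar : ℝ := ⨅ n, zn n with hzbar
    have hztend : Tendsto zn atTop (nhds zbar) := tendsto_atTop_ciInf hznanti hbdd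
    have hzbarx : x ≤ zbar := le_ciInf fun n => (hznx n).le
    have heqn : ∀ n, hopfLax u0 (ξn n) t₁
        = hopfLax u0 (zn n) t + (ξn n - zn n) ^ 2 / (4 * (t₁ - t)) := fun n => (hmemm (ξn n)).2
    have hL : Tendsto (fun n => hopfLax u0 (ξn n) t₁) atTop (nhds (hopfLax u0 ξstar t₁)) :=
      (hcontt₁.tendsto ξstar).comp hξtend
    have hR : Tendsto (fun n => hopfLax u0 (zn n) t + (ξn n - zn n) ^ 2 / (4 * (t₁ - t)))
        atTop (nhds (hopfLax u0 zbar t + (ξstar - zbar) ^ 2 / (4 * (t₁ - t)))) := by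
      exact ((hcontt.tendsto zbar).comp hztend).add (((hξtend.sub hztend).pow 2).div_const _)
    have heql : hopfLax u0 ξstar t₁ = hopfLax u0 zbar t + (ξstar - zbar) ^ 2 / (4 * (t₁ - t)) := by
      apply tendsto_nhds_unique hL
      exact Tendsto.congr (fun n => (heqn n).symm) hR
    have hzbarle : zbar ≤ ξstar := by
      apply ge_of_tendsto hξtend
      filter_upwards with n
      exact le_trans (ciInf_le hbdd n) (hle (ξn n))
    have hzbarmem : zbar ∈ minSet u0 ξstar t t₁ := ⟨hzbarle, heql⟩
    have : zbar ≤ zp ξstar :=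
      le_csSup (minSet_t_bddBelow hmono hlc hgrowth ξstar ht htt).2 hzbarmem
    linarith

lemma disjoint_Ioo_of_le {a b a' b' : ℝ} (h : b ≤ a') : Ioo a b ∩ Ioo a' b' = ∅ := by
  ext y
  simp only [mem_inter_iff, mem_Ioo, mem_empty_iff_false, iff_false, not_and]
  intro h1 h2 h3
  linarith

/-- identification of the forward characteristic -/
lemma wminus_eq {u0 : ℝ → ℝ} (hmono : Monotone u0)
    (hlc : ∀ y : ℝ, ContinuousWithinAt u0 (Iic y) y)
    (hgrowth : Tendsto (fun y => u0 y / y ^ 2) atBot (nhds 0)) {x t t₁ ξ : ℝ}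
    (ht : 0 < t) (htt : t < t₁) (h1 : yminus u0 ξ t t₁ < x) (h2 : x < yplus u0 ξ t t₁) :
    wminus u0 x t t₁ = ξ := by
  set S : Set ℝ := {x' | x ≤ yminus u0 x' t t₁} with hS
  have hlow : ∀ x' ∈ S, ξ ≤ x' := by
    intro x' hx'
    by_contra hcon
    push_neg at hcon
    have hub : yplus u0 x' t t₁ ≤ yminus u0 ξ t t₁ :=
      minSet_t_mono hmono hgrowth ht htt hcon
        (zplus_mem hmono hlc hgrowth x' ht htt) (zminus_mem hmono hlc hgrowth ξ ht htt)
    have h3 : yminus u0 x' t t₁ ≤ yplus u0 x' t t₁ :=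
      le_csSup (minSet_t_bddBelow hmono hlc hgrowth x' ht htt).2
        (zminus_mem hmono hlc hgrowth x' ht htt)
    have h4 : x ≤ yminus u0 x' t t₁ := hx'
    linarith
  have hsub : Ioi ξ ⊆ S := by
    intro x' hx'
    have hub : yplus u0 ξ t t₁ ≤ yminus u0 x' t t₁ :=
      minSet_t_mono hmono hgrowth ht htt hx'
        (zplus_mem hmono hlc hgrowth ξ ht htt) (zminus_mem hmono hlc hgrowth x' ht htt)
    exact le_of_lt (lt_of_lt_of_le h2 hub)
  have hne : S.Nonempty := ⟨ξ + 1, hsub (mem_Ioi.mpr (lt_add_one ξ))⟩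
  have hbdd : BddBelow S := ⟨ξ, hlow⟩
  rw [wminus]
  apply le_antisymm
  · calc sInf S ≤ sInf (Ioi ξ) := csInf_le_csInf hbdd (nonempty_Ioi) hsub
      _ = ξ := csInf_Ioi
  · exact le_csInf hne hlow
/-- For shocks (x,t) and (x₁,t₁) with 0 < t ≤ t₁, the nonempty open
intervals J = (y⁻(x,t),y⁺(x,t)) and J₁ = (y⁻(x₁,t₁),y⁺(x₁,t₁)) are either
disjoint or nested (J ⊆ J₁), and J ⊆ J₁ holds exactly when (x,t) = (x₁,t₁) or
t < t₁ and x₁ = w(x;t,t₁). -/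
theorem shock_intervals_disjoint_or_nested
    (u0 : ℝ → ℝ) (hmono : Monotone u0)
    (hlc : ∀ y : ℝ, ContinuousWithinAt u0 (Iic y) y)
    (hgrowth : Tendsto (fun y => u0 y / y ^ 2) atBot (nhds 0))
    (x t x₁ t₁ : ℝ) (ht : 0 < t) (htt : t ≤ t₁)
    (hJ : yminus u0 x 0 t < yplus u0 x 0 t)
    (hJ1 : yminus u0 x₁ 0 t₁ < yplus u0 x₁ 0 t₁) :
    (Ioo (yminus u0 x 0 t) (yplus u0 x 0 t)
        ∩ Ioo (yminus u0 x₁ 0 t₁) (yplus u0 x₁ 0 t₁) = ∅ ∨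
      Ioo (yminus u0 x 0 t) (yplus u0 x 0 t)
        ⊆ Ioo (yminus u0 x₁ 0 t₁) (yplus u0 x₁ 0 t₁)) ∧
    (Ioo (yminus u0 x 0 t) (yplus u0 x 0 t)
        ⊆ Ioo (yminus u0 x₁ 0 t₁) (yplus u0 x₁ 0 t₁)
      ↔ ((x, t) = (x₁, t₁) ∨ (t < t₁ ∧ x₁ = wminus u0 x t t₁))) := by
  have hJne : (Ioo (yminus u0 x 0 t) (yplus u0 x 0 t)).Nonempty := nonempty_Ioo.mpr hJ
  have hymx : yminus u0 x 0 t ∈ minSet u0 x 0 t := yminus_mem0 hmono hlc hgrowth x ht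
  have hypx : yplus u0 x 0 t ∈ minSet u0 x 0 t := yplus_mem0 hmono hlc hgrowth x ht
  rcases eq_or_lt_of_le htt with heq | htlt
  · -- same time
    subst heq
    by_cases hx : x = x₁
    · subst hx
      refine ⟨Or.inr subset_rfl, ?_⟩
      exact ⟨fun _ => Or.inl rfl, fun _ => subset_rfl⟩
    · have hiff : ∀ hd : Ioo (yminus u0 x 0 t) (yplus u0 x 0 t)
          ∩ Ioo (yminus u0 x₁ 0 t) (yplus u0 x₁ 0 t) = ∅,
          (Ioo (yminus u0 x 0 t) (yplus u0 x 0 t)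
            ⊆ Ioo (yminus u0 x₁ 0 t) (yplus u0 x₁ 0 t)
          ↔ ((x, t) = (x₁, t) ∨ (t < t ∧ x₁ = wminus u0 x t t))) := by
        intro hd
        constructor
        · intro hsub
          obtain ⟨y0, hy0⟩ := hJne
          have h2 : y0 ∈ (∅ : Set ℝ) := hd ▸ mem_inter hy0 (hsub hy0)
          exact absurd h2 (notMem_empty y0)
        · rintro (h | ⟨h, -⟩)
          · have := congrArg Prod.fst h
            simp only at this
            exact absurd this hx
          · exact absurd h (lt_irrefl t)
      rcases lt_or_gt_of_ne hx with hlt | hlt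
      · have hc : yplus u0 x 0 t ≤ yminus u0 x₁ 0 t :=
          minSet_mono_generic ht (hub0 hmono hgrowth ht) (hub0 hmono hgrowth ht) hlt hypx
            (yminus_mem0 hmono hlc hgrowth x₁ ht)
        have hd := disjoint_Ioo_of_le (a := yminus u0 x 0 t) (b' := yplus u0 x₁ 0 t) hc
        exact ⟨Or.inl hd, hiff hd⟩
      · have hc : yplus u0 x₁ 0 t ≤ yminus u0 x 0 t :=
          minSet_mono_generic ht (hub0 hmono hgrowth ht) (hub0 hmono hgrowth ht) hlt
            (yplus_mem0 hmono hlc hgrowth x₁ ht) hymx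
        have hd : Ioo (yminus u0 x 0 t) (yplus u0 x 0 t)
            ∩ Ioo (yminus u0 x₁ 0 t) (yplus u0 x₁ 0 t) = ∅ := by
          rw [inter_comm]
          exact disjoint_Ioo_of_le hc
        exact ⟨Or.inl hd, hiff hd⟩
  · -- strict time ordering
    have ht₁ : (0:ℝ) < t₁ := ht.trans htlt
    set A : ℝ := yminus u0 x₁ 0 t₁ with hA
    set B : ℝ := yplus u0 x₁ 0 t₁ with hB
    set zm1 : ℝ := yminus u0 x₁ t t₁ with hzm1
    set zp1 : ℝ := yplus u0 x₁ t t₁ with hzp1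
    have hzm1e : zm1 = interp x₁ t t₁ A := yminus_t_eq hmono hlc hgrowth ht htlt
    have hzp1e : zp1 = interp x₁ t t₁ B := yplus_t_eq hmono hlc hgrowth ht htlt
    have hzm1mem : zm1 ∈ minSet u0 x₁ t t₁ := zminus_mem hmono hlc hgrowth x₁ ht htlt
    have hzp1mem : zp1 ∈ minSet u0 x₁ t t₁ := zplus_mem hmono hlc hgrowth x₁ ht htlt
    have hxnot : ∀ ξ, x ∉ minSet u0 ξ t t₁ := fun ξ => no_shock hmono hlc hgrowth ht htlt hJ
    have hAmem : A ∈ minSet u0 zm1 0 t := by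
      obtain ⟨y, hy⟩ := (minSet0_basic hmono hlc hgrowth zm1 ht).1
      have hd := decomp hmono hgrowth ht htlt hzm1mem hy
      have h3 : interp x₁ t t₁ y = interp x₁ t t₁ A := by rw [← hd.2, hzm1e]
      have h4 : y = A := (interp_strictMono ht htlt x₁).injective h3
      rwa [h4] at hy
    have hBmem : B ∈ minSet u0 zp1 0 t := by
      obtain ⟨y, hy⟩ := (minSet0_basic hmono hlc hgrowth zp1 ht).1
      have hd := decomp hmono hgrowth ht htlt hzp1mem hy
      have h3 : interp x₁ t t₁ y = interp x₁ t t₁ B := by rw [← hd.2, hzp1e]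
      have h4 : y = B := (interp_strictMono ht htlt x₁).injective h3
      rwa [h4] at hy
    have hProdne : (x, t) ≠ (x₁, t₁) := by
      intro h
      have := congrArg Prod.snd h
      simp only at this
      exact absurd this htlt.ne
    have hforward : x₁ = wminus u0 x t t₁ → zm1 < x ∧ x < zp1 := by
      intro h
      obtain ⟨ξ, hb1, hb2⟩ := persistence hmono hlc hgrowth ht htlt hJ
      have hw := wminus_eq hmono hlc hgrowth ht htlt hb1 hb2
      have hx₁ξ : x₁ = ξ := by rw [h, hw]
      rw [hzm1, hzp1, hx₁ξ]
      exact ⟨hb1, hb2⟩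
    rcases lt_trichotomy x zm1 with h1 | h1 | h1
    · -- strictly to the left : disjoint
      have hc3 : yplus u0 x 0 t ≤ A :=
        minSet_mono_generic ht (hub0 hmono hgrowth ht) (hub0 hmono hgrowth ht) h1 hypx hAmem
      have hd := disjoint_Ioo_of_le (a := yminus u0 x 0 t) (b' := B) hc3
      refine ⟨Or.inl hd, ?_⟩
      constructor
      · intro hsub
        obtain ⟨y0, hy0⟩ := hJne
        have h2 : y0 ∈ (∅ : Set ℝ) := hd ▸ mem_inter hy0 (hsub hy0)
        exact absurd h2 (notMem_empty y0)
      · rintro (h | ⟨-, h⟩)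
        · exact absurd h hProdne
        · have := hforward h
          linarith [this.1]
    · exact absurd (by rw [h1]; exact hzm1mem) (hxnot x₁)
    · rcases lt_trichotomy x zp1 with h2 | h2 | h2
      · -- between : nested
        have hcA : A ≤ yminus u0 x 0 t :=
          minSet_mono_generic ht (hub0 hmono hgrowth ht) (hub0 hmono hgrowth ht) h1 hAmem hymx
        have hcB : yplus u0 x 0 t ≤ B :=
          minSet_mono_generic ht (hub0 hmono hgrowth ht) (hub0 hmono hgrowth ht) h2 hypx hBmem
        have hsub : Ioo (yminus u0 x 0 t) (yplus u0 x 0 t) ⊆ Ioo A B := fun a ha =>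
          ⟨lt_of_le_of_lt hcA ha.1, lt_of_lt_of_le ha.2 hcB⟩
        refine ⟨Or.inr hsub, ?_⟩
        constructor
        · intro _
          exact Or.inr ⟨htlt, (wminus_eq hmono hlc hgrowth ht htlt h1 h2).symm⟩
        · intro _
          exact hsub
      · exact absurd (by rw [h2]; exact hzp1mem) (hxnot x₁)
      · -- strictly to the right : disjoint
        have hc4 : B ≤ yminus u0 x 0 t :=
          minSet_mono_generic ht (hub0 hmono hgrowth ht) (hub0 hmono hgrowth ht) h2 hBmem hymx
        have hd : Ioo (yminus u0 x 0 t) (yplus u0 x 0 t) ∩ Ioo A B = ∅ := by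
          rw [inter_comm]
          exact disjoint_Ioo_of_le hc4
        refine ⟨Or.inl hd, ?_⟩
        constructor
        · intro hsub
          obtain ⟨y0, hy0⟩ := hJne
          have h2' : y0 ∈ (∅ : Set ℝ) := hd ▸ mem_inter hy0 (hsub hy0)
          exact absurd h2' (notMem_empty y0)
        · rintro (h | ⟨-, h⟩)
          · exact absurd h hProdne
          · have := hforward h
            linarith [this.2]
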